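/- Let 0 ≤ α < 1 and θ ∈ ℝ with θ > −α and (α,θ) ≠ (0,0). Define p(n,k) for integers n ≥ 1 and k ∈ ℤ by p(1,1) := 1, p(1,k) := 0 for k ≠ 1, and the recursion p(n+1,k) = ((θ + α(k−1))/(θ + n))·p(n,k−1) + (1 − (θ + αk)/(θ + n))·p(n,k). Then for all 1 ≤ k ≤ n: p(n,k) = c_{k,α,θ} · (Γ(θ + αk)/Γ(θ + n)) · s_α(n,k), where c_{k,α,θ} := Π_{m=1}^{k} Γ(θ + 1 + (m−1)α)/(Γ(1−α)·Γ(θ + mα)) and s_α(n,k) is defined by s_α(0,0) := 1, s_α(n,k) := 0 for k < 0 or k > n, and s_α(n+1,k) = Γ(1−α)·s_α(n,k−1) + (n − αk)·s_α(n,k). -/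

import Mathlib

/-- `s_α`, defined by `s_α(0,0) = 1`, `s_α(n,k) = 0` for `k > n` (automatic below), and the
recursion `s_α(n+1,k) = Γ(1-α) s_α(n,k-1) + (n - αk) s_α(n,k)` (with `s_α(n,-1) := 0`). -/
noncomputable def salpha (α : ℝ) : ℕ → ℕ → ℝ
  | 0, 0 => 1
  | 0, _ + 1 => 0
  | n + 1, 0 => (n : ℝ) * salpha α n 0
  | n + 1, k + 1 =>
      Real.Gamma (1 - α) * salpha α n k + ((n : ℝ) - α * ((k : ℝ) + 1)) * salpha α n (k + 1)

/-- `c_{k,α,θ} := ∏_{m=1}^{k} Γ(θ + 1 + (m-1)α)/(Γ(1-α) Γ(θ + mα))`. -/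
noncomputable def ccoef (α θ : ℝ) (k : ℕ) : ℝ :=
  ∏ m ∈ Finset.range k,
    Real.Gamma (θ + 1 + m * α) / (Real.Gamma (1 - α) * Real.Gamma (θ + (m + 1) * α))

/-- the two-parameter `(α,θ)` Chinese restaurant recursion: `p(1,1) = 1`, `p(1,k) = 0` for
`k ≠ 1`, and `p(n+1,k) = ((θ + α(k-1))/(θ + n)) p(n,k-1) + (1 - (θ + αk)/(θ + n)) p(n,k)`. -/
noncomputable def crp2 (α θ : ℝ) : ℕ → ℤ → ℝ
  | 0, _ => 0
  | 1, k => if k = 1 then 1 else 0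
  | n + 2, k =>
      ((θ + α * ((k : ℝ) - 1)) / (θ + ((n : ℝ) + 1))) * crp2 α θ (n + 1) (k - 1) +
        (1 - (θ + α * (k : ℝ)) / (θ + ((n : ℝ) + 1))) * crp2 α θ (n + 1) k

/-!
Write `q(n,k) := c_k Γ(θ + αk) s_α(n,k) / Γ(θ + n)`. The weights `w_k := c_k Γ(θ + αk)` satisfy
`Γ(1-α) w_{k+1} = (θ + αk) w_k`, because `Γ(θ + 1 + kα) = (θ + αk) Γ(θ + αk)`; together with
`Γ(θ + n + 1) = (θ + n) Γ(θ + n)` this turns the recursion of `s_α` into the recursion of the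
restaurant process, so `q` and `p` agree by induction on `n ≥ 1`, for every `k ≥ 0`.
-/

open Real

noncomputable def crpFormula (α θ : ℝ) (n k : ℕ) : ℝ :=
  ccoef α θ k * (Gamma (θ + α * k) / Gamma (θ + n)) * salpha α n k

section Recursions

variable {α θ : ℝ}

theorem salpha_succ_zero (n : ℕ) : salpha α (n + 1) 0 = 0 := by
  induction n with
  | zero => simp [salpha]
  | succ n ih => rw [salpha, ih, mul_zero]

theorem salpha_succ_succ (n k : ℕ) :
    salpha α (n + 1) (k + 1) =
      Gamma (1 - α) * salpha α n k + ((n : ℝ) - α * ((k : ℝ) + 1)) * salpha α n (k + 1) := by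
  rw [salpha]

theorem crp2_of_nonpos (n : ℕ) {k : ℤ} (hk : k ≤ 0) : crp2 α θ n k = 0 := by
  induction n generalizing k with
  | zero => rfl
  | succ n ih =>
    rcases n with _ | n
    · simp [crp2, show k ≠ 1 by omega]
    · rw [crp2, ih (by omega), ih hk]; ring

theorem crp2_succ {n : ℕ} (hn : 1 ≤ n) (k : ℤ) :
    crp2 α θ (n + 1) k =
      (θ + α * ((k : ℝ) - 1)) / (θ + n) * crp2 α θ n (k - 1) +
        (1 - (θ + α * k) / (θ + n)) * crp2 α θ n k := by
  obtain ⟨m, rfl⟩ : ∃ m, n = m + 1 := ⟨n - 1, by omega⟩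
  rw [crp2]
  push_cast
  ring

end Recursions

theorem ccoef_succ (α θ : ℝ) (k : ℕ) :
    ccoef α θ (k + 1) =
      ccoef α θ k * (Gamma (θ + 1 + k * α) / (Gamma (1 - α) * Gamma (θ + (k + 1) * α))) :=
  Finset.prod_range_succ _ _

theorem ccoef_succ_mul_Gamma {α θ : ℝ} {k : ℕ} (hΓα : Gamma (1 - α) ≠ 0)
    (hΓk : Gamma (θ + α * (k + 1)) ≠ 0) (hk : θ + α * k ≠ 0) :
    Gamma (1 - α) * (ccoef α θ (k + 1) * Gamma (θ + α * (k + 1))) =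
      (θ + α * k) * (ccoef α θ k * Gamma (θ + α * k)) := by
  rw [ccoef_succ, show θ + 1 + k * α = θ + α * k + 1 by ring, Gamma_add_one hk,
    show θ + (k + 1) * α = θ + α * (k + 1) by ring]
  field_simp

section Formula

variable {α θ : ℝ} (h0 : 0 ≤ α) (h1 : α < 1) (hθ : -α < θ)
include h0 h1 hθ

theorem crpFormula_succ_succ {n : ℕ} (hn : 1 ≤ n) (k : ℕ) :
    crpFormula α θ (n + 1) (k + 1) =
      (θ + α * k) / (θ + n) * crpFormula α θ n k +
        (1 - (θ + α * (k + 1)) / (θ + n)) * crpFormula α θ n (k + 1) := by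
  have hΓα : Gamma (1 - α) ≠ 0 := (Gamma_pos_of_pos (by linarith)).ne'
  have hn' : (1 : ℝ) ≤ n := by exact_mod_cast hn
  have hθn : θ + n ≠ 0 := by linarith
  have hΓn : Gamma (θ + n) ≠ 0 := (Gamma_pos_of_pos (by linarith)).ne'
  have hΓn_succ : Gamma (θ + (n + 1)) = (θ + n) * Gamma (θ + n) := by
    rw [← add_assoc, Gamma_add_one hθn]
  have hweight : Gamma (1 - α) * (ccoef α θ (k + 1) * Gamma (θ + α * (k + 1))) * salpha α n k =
      (θ + α * k) * (ccoef α θ k * Gamma (θ + α * k)) * salpha α n k := by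
    rcases k with _ | k
    -- `θ + α * 0` may vanish, but then the factor `s_α(n,0)` does
    · obtain ⟨m, rfl⟩ : ∃ m, n = m + 1 := ⟨n - 1, by omega⟩
      simp [salpha_succ_zero]
    · have hk : (1 : ℝ) ≤ (k + 1 : ℕ) := by simp
      rw [ccoef_succ_mul_Gamma hΓα (Gamma_pos_of_pos (by nlinarith)).ne' (by nlinarith)]
  unfold crpFormula
  rw [salpha_succ_succ]
  push_cast
  rw [hΓn_succ]
  field_simp
  linear_combination hweight

theorem crp2_eq_crpFormula {n : ℕ} (hn : 1 ≤ n) (k : ℕ) : crp2 α θ n k = crpFormula α θ n k := by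
  induction n, hn using Nat.le_induction generalizing k with
  | base =>
    rcases k with _ | _ | k
    · simp [crp2, crpFormula, salpha]
    · have hΓα : Gamma (1 - α) ≠ 0 := (Gamma_pos_of_pos (by linarith)).ne'
      have hΓθα : Gamma (θ + α) ≠ 0 := (Gamma_pos_of_pos (by linarith)).ne'
      have hΓθ : Gamma (θ + 1) ≠ 0 := (Gamma_pos_of_pos (by linarith)).ne'
      simp [crp2, crpFormula, ccoef, salpha, field]
    · simp [crp2, crpFormula, salpha, Nat.cast_add_one_ne_zero]
  | succ n hn ih =>
    rcases k with _ | k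
    · simp [crp2_of_nonpos, crpFormula, salpha_succ_zero]
    · rw [crpFormula_succ_succ h0 h1 hθ hn, crp2_succ hn, ← ih, ← ih]
      push_cast [add_sub_cancel_right]
      rfl

end Formula

theorem statement14_general (α θ : ℝ) (h0 : 0 ≤ α) (h1 : α < 1) (hθ : -α < θ) :
    ∀ n k : ℕ, 1 ≤ k → k ≤ n →
      crp2 α θ n (k : ℤ) =
        ccoef α θ k * (Real.Gamma (θ + α * k) / Real.Gamma (θ + n)) * salpha α n k :=
  fun _ k hk hkn => crp2_eq_crpFormula h0 h1 hθ (hk.trans hkn) k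

/-- for `0 ≤ α < 1`, `θ > -α`, `(α,θ) ≠ (0,0)` and `1 ≤ k ≤ n`,
`p(n,k) = c_{k,α,θ} (Γ(θ + αk)/Γ(θ + n)) s_α(n,k)`. -/
theorem statement14 (α θ : ℝ) (h0 : 0 ≤ α) (h1 : α < 1) (hθ : -α < θ)
    (hne : ¬(α = 0 ∧ θ = 0)) :
    ∀ n k : ℕ, 1 ≤ k → k ≤ n →
      crp2 α θ n (k : ℤ) =
        ccoef α θ k * (Real.Gamma (θ + α * k) / Real.Gamma (θ + n)) * salpha α n k :=
  statement14_general α θ h0 h1 hθ
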